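/- (Intertwining property, Kato.) Let (H(s), P(s), τ) be an adiabatic process as in the context, with adiabatic Hamiltonian H_A(s) = λ(s)·I + (i/τ)[Ṗ(s), P(s)] and U_A the solution of i ∂_s U_A(s) = τ H_A(s) U_A(s), U_A(0) = I. Then for all s ∈ [0,1], U_A(s)·P(0) = P(s)·U_A(s). -/

import Mathlib

open Set ContinuousLinearMap

/-!
Differentiating `P² = P` gives `P Ṗ + Ṗ P = Ṗ`, hence `P Ṗ P = 0` and `[[Ṗ, P], P] = Ṗ`; so the
generator `G = -iτ H_A` satisfies `Ṗ = [G, P]`, the scalar part `λ` commuting with everything.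
Then `D(s) = U_A(s) P(0) - P(s) U_A(s)` solves `Ḋ = G D` with `D(0) = 0`, and Grönwall forces
`D = 0`.
-/

/-- The commutatorCLM `[A,B] = AB - BA` of two continuous linear operators. -/
def commutatorCLM {H : Type*} [NormedAddCommGroup H] [InnerProductSpace ℂ H]
    (A B : H →L[ℂ] H) : H →L[ℂ] H :=
  A.comp B - B.comp A

section Algebra

variable {R : Type*} [Ring R] {Q E : R}

theorem IsIdempotentElem.mul_mul_self_eq_zero (hQ : IsIdempotentElem Q)
    (hE : Q * E + E * Q = E) : Q * E * Q = 0 := by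
  have h : Q * E = Q * E + Q * E * Q := by
    nth_rewrite 1 [← hE]
    rw [mul_add, ← mul_assoc, hQ.eq, mul_assoc]
  exact left_eq_add.mp h

theorem IsIdempotentElem.commutator_commutator_eq (hQ : IsIdempotentElem Q)
    (hE : Q * E + E * Q = E) : (E * Q - Q * E) * Q - Q * (E * Q - Q * E) = E := by
  have hQEQ := hQ.mul_mul_self_eq_zero hE
  calc (E * Q - Q * E) * Q - Q * (E * Q - Q * E)
      = E * (Q * Q) + (Q * Q) * E - 2 * (Q * E * Q) := by noncomm_ring
    _ = E := by rw [hQ.eq, hQEQ, mul_zero, sub_zero, add_comm, hE]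

/-- With `E = Ṗ`, `Q = P` and `l = λ`, `G` is `-iτ H_A`: the commutator term of the adiabatic
Hamiltonian is exactly what makes `[G, P] = Ṗ`. -/
theorem IsIdempotentElem.adiabaticGenerator_commutator [Algebra ℂ R] {τ : ℂ} (hτ : τ ≠ 0)
    (l : ℂ) (hQ : IsIdempotentElem Q) (hE : Q * E + E * Q = E) :
    let G := (-Complex.I * τ) • (l • (1 : R) + (Complex.I / τ) • (E * Q - Q * E))
    G * Q - Q * G = E := by
  have hscalar : (-Complex.I * τ) * (Complex.I / τ) = 1 := by
    field_simp
    simp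
  intro G
  have hG : G = (-Complex.I * τ * l) • (1 : R) + (E * Q - Q * E) := by
    simp only [G, smul_add, smul_smul, hscalar, one_smul]
  rw [hG, add_mul, mul_add, smul_mul_assoc, mul_smul_comm, one_mul, mul_one,
    add_sub_add_left_eq_sub, hQ.commutator_commutator_eq hE]

end Algebra

section Calculus

theorem HasDerivWithinAt.mul_add_mul_eq_of_isIdempotentElem {𝕜 A : Type*}
    [NontriviallyNormedField 𝕜] [NormedRing A] [NormedAlgebra 𝕜 A] {P : 𝕜 → A} {P' : A}
    {s : Set 𝕜} {t : 𝕜} (hP : HasDerivWithinAt P P' s t) (hs : UniqueDiffWithinAt 𝕜 s t)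
    (ht : t ∈ s) (hidem : ∀ x ∈ s, IsIdempotentElem (P x)) :
    P t * P' + P' * P t = P' := by
  have hsq : HasDerivWithinAt P (P' * P t + P t * P') s t :=
    (hP.mul hP).congr (fun x hx => (hidem x hx).symm) (hidem t ht).symm
  rw [add_comm]
  exact hs.eq_deriv s hsq hP

variable {A : Type*} [NormedRing A] [NormedAlgebra ℝ A] {a b : ℝ}

theorem eqOn_zero_of_hasDerivWithinAt_mul_left {G D : ℝ → A}
    (hG : ContinuousOn G (Icc a b))
    (hD : ∀ t ∈ Icc a b, HasDerivWithinAt D (G t * D t) (Icc a b) t) (ha : D a = 0) :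
    ∀ t ∈ Icc a b, D t = 0 := by
  obtain ⟨C, hC⟩ := isCompact_Icc.exists_bound_of_continuousOn hG
  refine eq_zero_of_abs_deriv_le_mul_abs_self_of_eq_zero_right (K := C)
    (fun t ht => (hD t ht).continuousWithinAt)
    (fun t ht => (hD t (Ico_subset_Icc_self ht)).mono_of_mem_nhdsWithin
      (Icc_mem_nhdsGE_of_mem ht)) ha fun t ht => ?_
  exact (norm_mul_le _ _).trans <|
    mul_le_mul_of_nonneg_right (hC t (Ico_subset_Icc_self ht)) (norm_nonneg _)

/-- If `U` is generated by `G` and `Q` moves by commutation with `G`, then `U` carries `Q a`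
to `Q t`: the difference `U t * Q a - Q t * U t` solves the same linear equation as `U`. -/
theorem mul_eq_mul_of_hasDerivWithinAt_commutator {G U Q : ℝ → A}
    (hG : ContinuousOn G (Icc a b))
    (hU : ∀ t ∈ Icc a b, HasDerivWithinAt U (G t * U t) (Icc a b) t)
    (hQ : ∀ t ∈ Icc a b, HasDerivWithinAt Q (G t * Q t - Q t * G t) (Icc a b) t)
    (hUa : U a = 1) :
    ∀ t ∈ Icc a b, U t * Q a = Q t * U t := by
  have hD : ∀ t ∈ Icc a b, HasDerivWithinAt (fun x => U x * Q a - Q x * U x)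
      (G t * (U t * Q a - Q t * U t)) (Icc a b) t := by
    intro t ht
    refine (((hU t ht).mul_const (Q a)).sub ((hQ t ht).mul (hU t ht))).congr_deriv ?_
    noncomm_ring
  intro t ht
  exact sub_eq_zero.mp <|
    eqOn_zero_of_hasDerivWithinAt_mul_left hG hD (by simp [hUa]) t ht

end Calculus

theorem stmt8
    {H : Type*} [NormedAddCommGroup H] [InnerProductSpace ℂ H]
    (τ : ℝ) (hτ : 0 < τ)
    (P P' : ℝ → H →L[ℂ] H)
    (hPD : ∀ s ∈ Icc (0:ℝ) 1, HasDerivWithinAt P (P' s) (Icc 0 1) s)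
    (hPC : ContinuousOn P' (Icc 0 1))
    (hPproj : ∀ s ∈ Icc (0:ℝ) 1, (P s).comp (P s) = P s)
    (lam : ℝ → ℝ) (hlam : ContinuousOn lam (Icc 0 1))
    (UA : ℝ → H →L[ℂ] H) (hUA0 : UA 0 = 1)
    (hUAD : ∀ s ∈ Icc (0:ℝ) 1,
      HasDerivWithinAt UA
        ((-Complex.I * (τ : ℂ)) •
          (((lam s : ℂ) • (1 : H →L[ℂ] H)
            + (Complex.I / (τ : ℂ)) • commutatorCLM (P' s) (P s)).comp (UA s)))
        (Icc 0 1) s) :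
    ∀ s ∈ Icc (0:ℝ) 1, (UA s).comp (P 0) = (P s).comp (UA s) := by
  set G : ℝ → H →L[ℂ] H := fun s =>
    (-Complex.I * (τ : ℂ)) • ((lam s : ℂ) • 1 + (Complex.I / (τ : ℂ)) • (P' s * P s - P s * P' s))
  have hPcont : ContinuousOn P (Icc 0 1) := fun s hs => (hPD s hs).continuousWithinAt
  have hGcont : ContinuousOn G (Icc 0 1) := by fun_prop
  have hPD' : ∀ s ∈ Icc (0:ℝ) 1, HasDerivWithinAt P (G s * P s - P s * G s) (Icc 0 1) s := by
    intro s hs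
    have hanti := (hPD s hs).mul_add_mul_eq_of_isIdempotentElem
      (uniqueDiffOn_Icc zero_lt_one s hs) hs hPproj
    rw [IsIdempotentElem.adiabaticGenerator_commutator (Complex.ofReal_ne_zero.mpr hτ.ne')
      _ (hPproj s hs) hanti]
    exact hPD s hs
  exact mul_eq_mul_of_hasDerivWithinAt_commutator hGcont hUAD hPD' hUA0
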